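/- arXiv:0707.2327 — 3 statements merged into one kernel-verified Lean document; each statement's English description precedes it below -/
import Mathlib

section
/- Let R be a real closed field, A = R[x₁,…,x_n], and δ ∈ Sper A with ν_δ(x_j) = 0 for 1 ≤ j ≤ p and ν_δ(x_j) > 0 for j > p. If I_δ ≠ ∅ then G_δ ≠ ∅; moreover there exist q ∈ G_δ and a positive integer N such that for all j ∈ I_δ one has 1/|x_j|_δ < |x_q|_δ^N in A(δ). -/
/-
The coordinates `x j` with `j ≥ p` have `|x j| ≤ 1`, since otherwise their inverses would lie
in the convex hull `R_δ`. If all coordinates were bounded by constants of `R`, then so would be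
every element of `R_δ`, in particular `1 / |x j₀|` for an infinitesimal `x j₀`: impossible. So
the largest coordinate `|x q|` is infinitely large, and `q < p`. Every element of `A[δ]`, hence
of `R_δ`, is then bounded by `c |x q| ^ N` with `c ∈ R`, and `c < |x q|`; applying this to the
inverses `1 / x j ∈ R_δ` for `j < p` gives the exponent.
-/

/-- An ordered subfield `R` of a linearly ordered field is real closed if every nonnegative
element has a square root in `R` and every polynomial over `R` of odd degree has a root. -/
def IsRealClosedSubfield {F : Type*} [Field F] [LinearOrder F] [IsStrictOrderedRing F] (R : Subfield F) : Prop :=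
  (∀ x : F, x ∈ R → 0 ≤ x → ∃ y ∈ R, y ^ 2 = x) ∧
    ∀ p : Polynomial R, Odd p.natDegree → ∃ z : R, Polynomial.eval z p = 0

/-- The convex hull of a subring `B` in a linearly ordered field `F`: the valuation ring
of all elements bounded in absolute value by an element of `B`. -/
def convexHullSubring {F : Type*} [Field F] [LinearOrder F] [IsStrictOrderedRing F] (B : Subring F) : Subring F where
  carrier := {x : F | ∃ z ∈ B, |x| ≤ z}
  zero_mem' := ⟨0, B.zero_mem, by simp⟩
  one_mem' := ⟨1, B.one_mem, by simp⟩
  add_mem' := by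
    rintro a b ⟨z₁, hz₁, h₁⟩ ⟨z₂, hz₂, h₂⟩
    exact ⟨z₁ + z₂, B.add_mem hz₁ hz₂, (abs_add_le a b).trans (add_le_add h₁ h₂)⟩
  neg_mem' := by
    rintro a ⟨z, hz, h⟩
    exact ⟨z, hz, by simpa using h⟩
  mul_mem' := by
    rintro a b ⟨z₁, hz₁, h₁⟩ ⟨z₂, hz₂, h₂⟩
    refine ⟨z₁ * z₂, B.mul_mem hz₁ hz₂, ?_⟩
    rw [abs_mul]
    exact mul_le_mul h₁ h₂ (abs_nonneg b) ((abs_nonneg a).trans h₁)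

/-- The subring `A[δ] = R[x₁(δ),…,x_n(δ)]` of the ordered field `F = A(δ)`: the subring
generated by the subfield `R` together with the coordinates `x j`. -/
def pointRing {F : Type*} [Field F] [LinearOrder F] [IsStrictOrderedRing F] (R : Subfield F) {n : ℕ}
    (x : Fin n → F) : Subring F :=
  Subring.closure ((R : Set F) ∪ Set.range x)

/-- `y` is infinitesimal over `R`: `|y| < ε` for every positive `ε ∈ R`. -/
def IsInfinitesimalOver {F : Type*} [Field F] [LinearOrder F] [IsStrictOrderedRing F] (R : Subfield F) (y : F) : Prop :=
  ∀ ε ∈ R, 0 < ε → |y| < ε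

/-- `|y|` lies between two positive constants of `R`. -/
def IsBoundedUnitOver {F : Type*} [Field F] [LinearOrder F] [IsStrictOrderedRing F] (R : Subfield F) (y : F) : Prop :=
  ∃ c₁ ∈ R, ∃ c₂ ∈ R, 0 < c₁ ∧ c₁ < |y| ∧ |y| < c₂

/-- `y` is infinitely large over `R`: `|y| > N` for every `N ∈ R`. -/
def IsInfiniteOver {F : Type*} [Field F] [LinearOrder F] [IsStrictOrderedRing F] (R : Subfield F) (y : F) : Prop :=
  ∀ N ∈ R, N < |y|

/-- The group of units of a subring `V` of a field `F`, as a subgroup of `Fˣ`. -/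
def unitSubgroup {F : Type*} [Field F] [LinearOrder F] [IsStrictOrderedRing F] (V : Subring F) : Subgroup Fˣ where
  carrier := {u : Fˣ | (u : F) ∈ V ∧ ((u⁻¹ : Fˣ) : F) ∈ V}
  one_mem' := by simp [V.one_mem]
  mul_mem' := by
    rintro a b ⟨ha1, ha2⟩ ⟨hb1, hb2⟩
    refine ⟨by simpa using V.mul_mem ha1 hb1, ?_⟩
    have : ((b⁻¹ : Fˣ) : F) * ((a⁻¹ : Fˣ) : F) ∈ V := V.mul_mem hb2 ha2
    simpa [mul_comm] using this
  inv_mem' := by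
    rintro a ⟨h1, h2⟩
    exact ⟨h2, by simpa using h1⟩

/-- The order on the value group `Fˣ/Vˣ` attached to the valuation ring `V`:
the class of `u` is `≤` the class of `w` iff `w/u ∈ V`. -/
def valueGroupLE {F : Type*} [Field F] [LinearOrder F] [IsStrictOrderedRing F] (V : Subring F)
    (a b : Fˣ ⧸ unitSubgroup V) : Prop :=
  ∃ u w : Fˣ, a = QuotientGroup.mk u ∧ b = QuotientGroup.mk w ∧ ((w * u⁻¹ : Fˣ) : F) ∈ V

section

variable {F : Type*} [Field F] [LinearOrder F] [IsStrictOrderedRing F]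

def polyBoundedSubring (R : Subfield F) {B : F} (hB : 1 ≤ B) : Subring F where
  carrier := {y | ∃ c ∈ R, ∃ N : ℕ, |y| ≤ c * B ^ N}
  zero_mem' := ⟨0, R.zero_mem, 0, by simp⟩
  one_mem' := ⟨1, R.one_mem, 0, by simp⟩
  add_mem' := by
    rintro a b ⟨c₁, hc₁, N₁, h₁⟩ ⟨c₂, hc₂, N₂, h₂⟩
    have hBpow (N : ℕ) : 0 < B ^ N := pow_pos (zero_lt_one.trans_le hB) N
    have hc₁0 : 0 ≤ c₁ := nonneg_of_mul_nonneg_left ((abs_nonneg a).trans h₁) (hBpow N₁)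
    have hc₂0 : 0 ≤ c₂ := nonneg_of_mul_nonneg_left ((abs_nonneg b).trans h₂) (hBpow N₂)
    refine ⟨c₁ + c₂, R.add_mem hc₁ hc₂, N₁ + N₂, ?_⟩
    calc |a + b| ≤ c₁ * B ^ N₁ + c₂ * B ^ N₂ := (abs_add_le a b).trans (add_le_add h₁ h₂)
      _ ≤ c₁ * B ^ (N₁ + N₂) + c₂ * B ^ (N₁ + N₂) := by
        gcongr <;> first | exact hB | omega
      _ = (c₁ + c₂) * B ^ (N₁ + N₂) := by ring
  neg_mem' := by
    rintro a ⟨c, hc, N, h⟩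
    exact ⟨c, hc, N, by simpa using h⟩
  mul_mem' := by
    rintro a b ⟨c₁, hc₁, N₁, h₁⟩ ⟨c₂, hc₂, N₂, h₂⟩
    refine ⟨c₁ * c₂, R.mul_mem hc₁ hc₂, N₁ + N₂, ?_⟩
    calc |a * b| ≤ c₁ * B ^ N₁ * (c₂ * B ^ N₂) := by
          rw [abs_mul]; exact mul_le_mul h₁ h₂ (abs_nonneg b) ((abs_nonneg a).trans h₁)
      _ = c₁ * c₂ * B ^ (N₁ + N₂) := by ring

lemma convexHullSubring_pointRing_le_polyBoundedSubring (R : Subfield F) {n : ℕ} {x : Fin n → F}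
    {B : F} (hB : 1 ≤ B) (hx : ∀ j, x j ∈ polyBoundedSubring R hB) :
    convexHullSubring (pointRing R x) ≤ polyBoundedSubring R hB := by
  have hgen : pointRing R x ≤ polyBoundedSubring R hB := by
    refine Subring.closure_le.mpr (Set.union_subset (fun r hr => ?_) (Set.range_subset_iff.mpr hx))
    exact ⟨|r|, abs_mem_iff.mpr hr, 0, by simp⟩
  rintro y ⟨z, hz, hyz⟩
  obtain ⟨c, hc, N, hzc⟩ := hgen hz
  exact ⟨c, hc, N, hyz.trans ((le_abs_self z).trans hzc)⟩

lemma abs_le_one_of_inv_not_mem_convexHullSubring {S : Subring F} {y : F}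
    (hy : y = 0 ∨ y⁻¹ ∉ convexHullSubring S) : |y| ≤ 1 := by
  rcases hy with rfl | hy
  · simp
  · by_contra! h
    exact hy ⟨1, S.one_mem, by rw [abs_inv]; exact inv_le_one_of_one_le₀ h.le⟩

lemma not_isInfinitesimalOver_of_abs_inv_le {R : Subfield F} {y c : F} (hy : y ≠ 0) (hc : c ∈ R)
    (hyc : |y⁻¹| ≤ c) : ¬IsInfinitesimalOver R y := by
  intro hinf
  have hy' : 0 < |y| := abs_pos.mpr hy
  have hc1 : 0 < c + 1 := by
    rw [abs_inv] at hyc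
    linarith [inv_pos.mpr hy']
  have hsmall : |y| < (c + 1)⁻¹ := hinf _ (R.inv_mem (R.add_mem hc R.one_mem)) (inv_pos.mpr hc1)
  rw [lt_inv_comm₀ hy' hc1, ← abs_inv] at hsmall
  linarith

lemma exists_isInfiniteOver_of_inv_mem_convexHullSubring {R : Subfield F} {n : ℕ} {x : Fin n → F}
    {y : F} (hy : y ≠ 0) (hyinf : IsInfinitesimalOver R y)
    (hinv : y⁻¹ ∈ convexHullSubring (pointRing R x)) : ∃ j, IsInfiniteOver R (x j) := by
  by_contra! hfin
  have hx : ∀ j, x j ∈ polyBoundedSubring R le_rfl := fun j => by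
    obtain ⟨c, hc, hxc⟩ : ∃ c ∈ R, |x j| ≤ c := by simpa [IsInfiniteOver] using hfin j
    exact ⟨c, hc, 0, by simpa using hxc⟩
  obtain ⟨c, hc, N, hyc⟩ := convexHullSubring_pointRing_le_polyBoundedSubring R le_rfl hx hinv
  exact not_isInfinitesimalOver_of_abs_inv_le hy hc (by simpa using hyc) hyinf

lemma eventually_abs_lt_pow_of_mem_polyBoundedSubring {R : Subfield F} {B y : F} {hB : 1 ≤ B}
    (hBinf : IsInfiniteOver R B) (hy : y ∈ polyBoundedSubring R hB) :
    ∀ᶠ N in Filter.atTop, |y| < B ^ N := by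
  obtain ⟨c, hc, N, hyc⟩ := hy
  have hcB : c < B := by simpa [abs_of_nonneg (zero_le_one.trans hB)] using hBinf c hc
  have hlt : |y| < B ^ (N + 1) := calc
    |y| ≤ c * B ^ N := hyc
    _ < B * B ^ N := mul_lt_mul_of_pos_right hcB (pow_pos (zero_lt_one.trans_le hB) N)
    _ = B ^ (N + 1) := by ring
  exact Filter.eventually_atTop.mpr ⟨N + 1, fun M hM => hlt.trans_le (pow_le_pow_right₀ hB hM)⟩

end

theorem infinitesimal_implies_infinite_coordinate_general {F : Type*} [Field F] [LinearOrder F] [IsStrictOrderedRing F]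
    (R : Subfield F) {n : ℕ} (x : Fin n → F) (p : ℕ)
    -- `ν_δ(x j) = 0` for `j ≤ p`
    (h0 : ∀ j : Fin n, (j : ℕ) < p → x j ≠ 0 ∧
      x j ∈ convexHullSubring (pointRing R x) ∧
      (x j)⁻¹ ∈ convexHullSubring (pointRing R x))
    -- `ν_δ(x j) > 0` for `j > p` (with the convention `ν(0) = ∞ > 0`)
    (hpos : ∀ j : Fin n, p ≤ (j : ℕ) →
      x j = 0 ∨ (x j)⁻¹ ∉ convexHullSubring (pointRing R x)) :
    (∃ j : Fin n, (j : ℕ) < p ∧ IsInfinitesimalOver R (x j)) →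
      ∃ q : Fin n, (q : ℕ) < p ∧ IsInfiniteOver R (x q) ∧
        ∃ N : ℕ, 0 < N ∧ ∀ j : Fin n, (j : ℕ) < p → IsInfinitesimalOver R (x j) →
          1 / |x j| < |x q| ^ N := by
  rintro ⟨j₀, hj₀p, hj₀inf⟩
  have : Nonempty (Fin n) := ⟨j₀⟩
  obtain ⟨q, hq⟩ := Finite.exists_max fun j => |x j|
  obtain ⟨j₁, hj₁⟩ := exists_isInfiniteOver_of_inv_mem_convexHullSubring
    (h0 j₀ hj₀p).1 hj₀inf (h0 j₀ hj₀p).2.2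
  have hqinf : IsInfiniteOver R (x q) := fun c hc => (hj₁ c hc).trans_le (hq j₁)
  have hqp : (q : ℕ) < p := by
    by_contra! hpq
    exact (abs_le_one_of_inv_not_mem_convexHullSubring (hpos q hpq)).not_gt (hqinf 1 R.one_mem)
  have hB : 1 ≤ |x q| := (hqinf 1 R.one_mem).le
  have hx : ∀ j, x j ∈ polyBoundedSubring R hB := fun j => ⟨1, R.one_mem, 1, by simpa using hq j⟩
  have hBinf : IsInfiniteOver R |x q| := by simpa [IsInfiniteOver] using hqinf
  have hev (j : Fin n) : ∀ᶠ N in Filter.atTop, (j : ℕ) < p → 1 / |x j| < |x q| ^ N := by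
    by_cases hj : (j : ℕ) < p
    · have hinv := convexHullSubring_pointRing_le_polyBoundedSubring R hB hx (h0 j hj).2.2
      filter_upwards [eventually_abs_lt_pow_of_mem_polyBoundedSubring hBinf hinv] with N hN _
      simpa using hN
    · exact .of_forall fun _ hj' => absurd hj' hj
  obtain ⟨N, hN, hNpos⟩ :=
    (Filter.eventually_all.mpr hev |>.and (Filter.eventually_gt_atTop 0)).exists
  exact ⟨q, hqp, hqinf, N, hNpos, fun j hj _ => hN j hj⟩

/-- Let `δ ∈ Sper A` with `ν_δ(x_j) = 0` for `j ≤ p` and `ν_δ(x_j) > 0` for `j > p`.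
If `I_δ ≠ ∅` then `G_δ ≠ ∅`; moreover there exist `q ∈ G_δ` and a positive integer `N`
such that `1/|x_j| < |x_q|^N` for all `j ∈ I_δ`. -/
theorem infinitesimal_implies_infinite_coordinate {F : Type*} [Field F] [LinearOrder F] [IsStrictOrderedRing F]
    (R : Subfield F) (hR : IsRealClosedSubfield R) {n : ℕ} (x : Fin n → F) (p : ℕ)
    -- `ν_δ(x j) = 0` for `j ≤ p`
    (h0 : ∀ j : Fin n, (j : ℕ) < p → x j ≠ 0 ∧
      x j ∈ convexHullSubring (pointRing R x) ∧
      (x j)⁻¹ ∈ convexHullSubring (pointRing R x))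
    -- `ν_δ(x j) > 0` for `j > p` (with the convention `ν(0) = ∞ > 0`)
    (hpos : ∀ j : Fin n, p ≤ (j : ℕ) →
      x j = 0 ∨ (x j)⁻¹ ∉ convexHullSubring (pointRing R x)) :
    (∃ j : Fin n, (j : ℕ) < p ∧ IsInfinitesimalOver R (x j)) →
      ∃ q : Fin n, (q : ℕ) < p ∧ IsInfiniteOver R (x q) ∧
        ∃ N : ℕ, 0 < N ∧ ∀ j : Fin n, (j : ℕ) < p → IsInfinitesimalOver R (x j) →
          1 / |x j| < |x q| ^ N :=
  infinitesimal_implies_infinite_coordinate_general R x p h0 hpos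
end

section
/- Let R be a real closed field, A = R[x₁,…,x_n], δ ∈ Sper A, and let T ⊆ {1,…,n} satisfy G_δ ⊆ T ⊆ G_δ ∪ F_δ. Set y_j = x_j for j ∉ T and y_j = 1/x_j for j ∈ T, and let B_T = R[y₁,…,y_n] ⊆ A(δ) be the R-subalgebra generated by the images of the y_j, with δ* the induced point of Sper B_T (same field A(δ), same ordering). Then δ* is a finite point of Sper B_T, i.e., every element of B_T[δ*] is bounded in absolute value by a constant from R. -/
section ConvexHull

variable {F : Type*} [Field F] [LinearOrder F] [IsStrictOrderedRing F]

theorem mem_convexHullSubring {B : Subring F} {a : F} :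
    a ∈ convexHullSubring B ↔ ∃ z ∈ B, |a| ≤ z :=
  Iff.rfl

theorem le_convexHullSubring (B : Subring F) : B ≤ convexHullSubring B := by
  intro a ha
  refine mem_convexHullSubring.mpr ⟨|a|, ?_, le_rfl⟩
  rcases abs_choice a with h | h <;> rw [h]
  · exact ha
  · exact B.neg_mem ha

theorem pointRing_le_convexHullSubring {R : Subfield F} {n : ℕ} {y : Fin n → F}
    (hy : ∀ j, y j ∈ convexHullSubring R.toSubring) :
    pointRing R y ≤ convexHullSubring R.toSubring := by
  refine Subring.closure_le.mpr ?_
  rintro a (ha | ⟨j, rfl⟩)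
  · exact le_convexHullSubring R.toSubring ha
  · exact hy j

variable {R : Subfield F} {y : F}

theorem mem_convexHullSubring_of_not_isInfiniteOver (hy : ¬IsInfiniteOver R y) :
    y ∈ convexHullSubring R.toSubring := by
  simp only [IsInfiniteOver, not_forall, not_lt] at hy
  obtain ⟨N, hN, hyN⟩ := hy
  exact mem_convexHullSubring.mpr ⟨N, hN, hyN⟩

theorem inv_mem_convexHullSubring_of_isInfiniteOver (hy : IsInfiniteOver R y) :
    y⁻¹ ∈ convexHullSubring R.toSubring := by
  refine mem_convexHullSubring.mpr ⟨1, R.one_mem, ?_⟩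
  rw [abs_inv]
  exact (inv_lt_one_of_one_lt₀ (hy 1 R.one_mem)).le

theorem inv_mem_convexHullSubring_of_isBoundedUnitOver (hy : IsBoundedUnitOver R y) :
    y⁻¹ ∈ convexHullSubring R.toSubring := by
  obtain ⟨c₁, hc₁, -, -, hpos, hlt, -⟩ := hy
  refine mem_convexHullSubring.mpr ⟨c₁⁻¹, R.inv_mem hc₁, ?_⟩
  rw [abs_inv]
  exact inv_anti₀ hpos hlt.le

end ConvexHull

theorem induced_point_is_finite_general {F : Type*} [Field F] [LinearOrder F] [IsStrictOrderedRing F]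
    (R : Subfield F) {n : ℕ} (x : Fin n → F)
    (T : Finset (Fin n))
    -- `G_δ ⊆ T`
    (hT1 : ∀ j : Fin n, IsInfiniteOver R (x j) → j ∈ T)
    -- `T ⊆ G_δ ∪ F_δ`
    (hT2 : ∀ j ∈ T, IsInfiniteOver R (x j) ∨ IsBoundedUnitOver R (x j)) :
    ∀ z ∈ pointRing R (fun j => if j ∈ T then (x j)⁻¹ else x j), ∃ N ∈ R, |z| ≤ N := by
  refine fun z hz => mem_convexHullSubring.mp (pointRing_le_convexHullSubring (fun j => ?_) hz)
  by_cases hj : j ∈ T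
  · rw [if_pos hj]
    rcases hT2 j hj with hinf | hbdd
    · exact inv_mem_convexHullSubring_of_isInfiniteOver hinf
    · exact inv_mem_convexHullSubring_of_isBoundedUnitOver hbdd
  · rw [if_neg hj]
    exact mem_convexHullSubring_of_not_isInfiniteOver (mt (hT1 j) hj)

/-- Let `δ ∈ Sper A` and `T` with `G_δ ⊆ T ⊆ G_δ ∪ F_δ`.  Setting `y_j = x_j` for `j ∉ T`
and `y_j = 1/x_j` for `j ∈ T`, the induced point `δ*` of `Sper B_T` (with
`B_T = R[y₁,…,y_n]` the subring of `A(δ)` generated by `R` and the `y_j`) is finite: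
every element of `B_T[δ*]` is bounded in absolute value by a constant from `R`. -/
theorem induced_point_is_finite {F : Type*} [Field F] [LinearOrder F] [IsStrictOrderedRing F]
    (R : Subfield F) (hR : IsRealClosedSubfield R) {n : ℕ} (x : Fin n → F)
    (T : Finset (Fin n))
    -- `G_δ ⊆ T`
    (hT1 : ∀ j : Fin n, IsInfiniteOver R (x j) → j ∈ T)
    -- `T ⊆ G_δ ∪ F_δ`
    (hT2 : ∀ j ∈ T, IsInfiniteOver R (x j) ∨ IsBoundedUnitOver R (x j)) :
    ∀ z ∈ pointRing R (fun j => if j ∈ T then (x j)⁻¹ else x j), ∃ N ∈ R, |z| ≤ N :=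
  induced_point_is_finite_general R x T hT1 hT2
end

section
/- In the setting above (δ ∈ Sper A, G_δ ⊆ T ⊆ G_δ ∪ F_δ, δ* the induced finite point of Sper B_T with the same ordered field A(δ)), let R_{δ*} be the convex hull of R in A(δ) and R_δ the convex hull of A[δ]. Then R_{δ*} ⊆ R_δ, the valuation ν_{δ*} satisfies ν_{δ*}(y_j) = 0 for j ∈ F_δ and ν_{δ*}(y_j) > 0 for j ∈ I_δ ∪ G_δ, and the induced order-preserving surjection φ̃ : Γ_{δ*} → Γ_δ of value groups satisfies φ̃(ν_{δ*}(y_j)) = ν_δ(x_j) for all j. -/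
section ConvexHull

variable {F : Type*} [Field F] [LinearOrder F] [IsStrictOrderedRing F]

theorem convexHullSubring_mono {B B' : Subring F} (h : B ≤ B') :
    convexHullSubring B ≤ convexHullSubring B' :=
  fun _ ⟨w, hw, hle⟩ => ⟨w, h hw, hle⟩

theorem toSubring_le_pointRing (R : Subfield F) {n : ℕ} (x : Fin n → F) :
    R.toSubring ≤ pointRing R x :=
  fun _ hz => Subring.subset_closure (Or.inl hz)

theorem mem_pointRing (R : Subfield F) {n : ℕ} (x : Fin n → F) (j : Fin n) :
    x j ∈ pointRing R x :=
  Subring.subset_closure (Or.inr ⟨j, rfl⟩)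

end ConvexHull

section OrdersOfMagnitude

variable {F : Type*} [Field F] [LinearOrder F] [IsStrictOrderedRing F] {R : Subfield F} {z : F}

namespace IsBoundedUnitOver

theorem ne_zero (h : IsBoundedUnitOver R z) : z ≠ 0 := by
  obtain ⟨c₁, -, -, -, hc₁, hlt, -⟩ := h
  rintro rfl
  rw [abs_zero] at hlt
  exact lt_asymm hc₁ hlt

theorem inv (h : IsBoundedUnitOver R z) : IsBoundedUnitOver R z⁻¹ := by
  obtain ⟨c₁, hc₁, c₂, hc₂, hc₁pos, hlt₁, hlt₂⟩ := h
  have hz : 0 < |z| := hc₁pos.trans hlt₁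
  refine ⟨c₂⁻¹, R.inv_mem hc₂, c₁⁻¹, R.inv_mem hc₁, inv_pos.2 (hz.trans hlt₂), ?_, ?_⟩ <;>
    rw [abs_inv]
  · exact (inv_lt_inv₀ (hz.trans hlt₂) hz).2 hlt₂
  · exact (inv_lt_inv₀ hz hc₁pos).2 hlt₁

theorem mem_convexHullSubring (h : IsBoundedUnitOver R z) :
    z ∈ convexHullSubring R.toSubring := by
  obtain ⟨-, -, c₂, hc₂, -, -, hlt⟩ := h
  exact ⟨c₂, hc₂, hlt.le⟩

end IsBoundedUnitOver

namespace IsInfiniteOver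

theorem ne_zero (h : IsInfiniteOver R z) : z ≠ 0 := by
  rintro rfl
  simpa using h 0 R.zero_mem

theorem inv (h : IsInfiniteOver R z) : IsInfinitesimalOver R z⁻¹ := by
  intro ε hε hεpos
  rw [abs_inv, inv_lt_comm₀ (abs_pos.2 h.ne_zero) hεpos]
  exact h ε⁻¹ (R.inv_mem hε)

theorem not_mem_convexHullSubring (h : IsInfiniteOver R z) :
    z ∉ convexHullSubring R.toSubring :=
  fun ⟨w, hw, hle⟩ => (h w hw).not_ge hle

end IsInfiniteOver

namespace IsInfinitesimalOver

theorem mem_convexHullSubring (h : IsInfinitesimalOver R z) :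
    z ∈ convexHullSubring R.toSubring :=
  ⟨1, R.one_mem, (h 1 R.one_mem one_pos).le⟩

theorem inv (h : IsInfinitesimalOver R z) (hz : z ≠ 0) : IsInfiniteOver R z⁻¹ := by
  intro N hN
  rcases le_or_gt N 0 with hN0 | hN0
  · exact hN0.trans_lt (abs_pos.2 (inv_ne_zero hz))
  · rw [abs_inv, lt_inv_comm₀ hN0 (abs_pos.2 hz)]
    exact h N⁻¹ (R.inv_mem hN) (inv_pos.2 hN0)

theorem not_isInfiniteOver (h : IsInfinitesimalOver R z) : ¬IsInfiniteOver R z :=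
  fun h' => lt_asymm (h 1 R.one_mem one_pos) (h' 1 R.one_mem)

theorem not_isBoundedUnitOver (h : IsInfinitesimalOver R z) : ¬IsBoundedUnitOver R z :=
  fun ⟨c₁, hc₁, _, _, hc₁pos, hlt, _⟩ => lt_asymm (h c₁ hc₁ hc₁pos) hlt

end IsInfinitesimalOver

end OrdersOfMagnitude

section ValueGroup

variable {F : Type*} [Field F] [LinearOrder F] [IsStrictOrderedRing F] {V W : Subring F}

theorem mem_unitSubgroup_iff {u : Fˣ} : u ∈ unitSubgroup V ↔ (u : F) ∈ V ∧ (u : F)⁻¹ ∈ V := by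
  rw [← Units.val_inv_eq_inv_val]
  rfl

theorem unitSubgroup_mono (h : V ≤ W) : unitSubgroup V ≤ unitSubgroup W :=
  fun _ hu => ⟨h hu.1, h hu.2⟩

theorem QuotientGroup.mk_inv_eq_mk_of_mem {G : Type*} [Group G] {H : Subgroup G} {g : G}
    (hg : g ∈ H) : ((g⁻¹ : G) : G ⧸ H) = g :=
  QuotientGroup.eq.2 (by simpa using H.mul_mem hg hg)

def valueGroupMap (h : V ≤ W) : Fˣ ⧸ unitSubgroup V →* Fˣ ⧸ unitSubgroup W :=
  QuotientGroup.map _ _ (MonoidHom.id Fˣ) (unitSubgroup_mono h)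

@[simp]
theorem valueGroupMap_mk (h : V ≤ W) (u : Fˣ) :
    valueGroupMap h (QuotientGroup.mk u) = QuotientGroup.mk u :=
  rfl

theorem valueGroupMap_mk_inv (h : V ≤ W) {w : Fˣ} (hw : w ∈ unitSubgroup W) :
    valueGroupMap h (QuotientGroup.mk w⁻¹) = QuotientGroup.mk w :=
  QuotientGroup.mk_inv_eq_mk_of_mem hw

theorem valueGroupMap_surjective (h : V ≤ W) : Function.Surjective (valueGroupMap h) := by
  intro q
  obtain ⟨u, rfl⟩ := QuotientGroup.mk_surjective q
  exact ⟨QuotientGroup.mk u, rfl⟩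

theorem valueGroupLE.map (h : V ≤ W) {a b : Fˣ ⧸ unitSubgroup V} (hab : valueGroupLE V a b) :
    valueGroupLE W (valueGroupMap h a) (valueGroupMap h b) := by
  obtain ⟨u, w, rfl, rfl, hm⟩ := hab
  exact ⟨u, w, rfl, rfl, h hm⟩

end ValueGroup

theorem induced_valuation_composed_general {F : Type*} [Field F] [LinearOrder F] [IsStrictOrderedRing F]
    (R : Subfield F) {n : ℕ} (x : Fin n → F)
    (T : Finset (Fin n))
    (hT1 : ∀ j : Fin n, IsInfiniteOver R (x j) → j ∈ T)
    (hT2 : ∀ j ∈ T, IsInfiniteOver R (x j) ∨ IsBoundedUnitOver R (x j))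
    (y : Fin n → F) (hy : y = fun j => if j ∈ T then (x j)⁻¹ else x j)
    (Vδ : Subring F) (hVδ : Vδ = convexHullSubring (pointRing R x))
    (Vstar : Subring F) (hVstar : Vstar = convexHullSubring R.toSubring) :
    -- `R_{δ*} ⊆ R_δ`
    (∀ z : F, z ∈ Vstar → z ∈ Vδ) ∧
    -- `ν_{δ*}(y_j) = 0` for `j ∈ F_δ`
    (∀ j : Fin n, IsBoundedUnitOver R (x j) →
      y j ≠ 0 ∧ y j ∈ Vstar ∧ (y j)⁻¹ ∈ Vstar) ∧
    -- `ν_{δ*}(y_j) > 0` for `j ∈ I_δ ∪ G_δ`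
    (∀ j : Fin n,
      (IsInfiniteOver R (x j) ∨
        (IsInfinitesimalOver R (x j) ∧ x j ≠ 0 ∧ (x j)⁻¹ ∈ Vδ)) →
      y j ≠ 0 ∧ y j ∈ Vstar ∧ (y j)⁻¹ ∉ Vstar) ∧
    -- the induced surjective order-preserving map `φ̃ : Γ_{δ*} → Γ_δ` with
    -- `φ̃(ν_{δ*}(y_j)) = ν_δ(x_j)`
    ∃ φ : Fˣ ⧸ unitSubgroup Vstar →* Fˣ ⧸ unitSubgroup Vδ,
      Function.Surjective φ ∧
      (∀ u : Fˣ, φ (QuotientGroup.mk u) = QuotientGroup.mk u) ∧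
      (∀ a b : Fˣ ⧸ unitSubgroup Vstar, valueGroupLE Vstar a b →
        valueGroupLE Vδ (φ a) (φ b)) ∧
      (∀ (j : Fin n) (u w : Fˣ), (u : F) = y j → (w : F) = x j →
        φ (QuotientGroup.mk u) = QuotientGroup.mk w) := by
  subst hy hVδ hVstar
  have hle := convexHullSubring_mono (toSubring_le_pointRing R x)
  refine ⟨fun z hz => hle hz, fun j hj => ?_, fun j hj => ?_,
    valueGroupMap hle, valueGroupMap_surjective hle, valueGroupMap_mk hle,
    fun a b => valueGroupLE.map hle, fun j u w hu hw => ?_⟩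
  · have hyj : IsBoundedUnitOver R (if j ∈ T then (x j)⁻¹ else x j) := by
      split_ifs
      exacts [hj.inv, hj]
    exact ⟨hyj.ne_zero, hyj.mem_convexHullSubring, hyj.inv.mem_convexHullSubring⟩
  · -- in both cases `y j` is a nonzero infinitesimal
    obtain ⟨hinf, hne⟩ : IsInfinitesimalOver R (if j ∈ T then (x j)⁻¹ else x j) ∧
        (if j ∈ T then (x j)⁻¹ else x j) ≠ 0 := by
      rcases hj with hj | ⟨hj, hx0, -⟩
      · simp only [hT1 j hj, if_true]
        exact ⟨hj.inv, inv_ne_zero hj.ne_zero⟩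
      · have hjT : j ∉ T := fun hjT =>
          (hT2 j hjT).elim hj.not_isInfiniteOver hj.not_isBoundedUnitOver
        simp only [hjT, if_false]
        exact ⟨hj, hx0⟩
    exact ⟨hne, hinf.mem_convexHullSubring, (hinf.inv hne).not_mem_convexHullSubring⟩
  · obtain rfl : u = if j ∈ T then w⁻¹ else w := by
      ext
      rw [hu, apply_ite Units.val, Units.val_inv_eq_inv_val, hw]
    split_ifs with hjT
    · refine valueGroupMap_mk_inv hle (mem_unitSubgroup_iff.2 ⟨?_, hle ?_⟩) <;> rw [hw]
      · exact le_convexHullSubring _ (mem_pointRing R x j)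
      · exact (hT2 j hjT).elim (fun h => h.inv.mem_convexHullSubring)
          (fun h => h.inv.mem_convexHullSubring)
    · rfl

/-- Setting of the previous statement: `δ ∈ Sper A`, `G_δ ⊆ T ⊆ G_δ ∪ F_δ`, `δ*` the induced
finite point of `Sper B_T` on the same ordered field `F = A(δ)`.  Let `R_{δ*}` be the convex
hull of `R` in `F` and `R_δ` the convex hull of `A[δ]`.  Then `R_{δ*} ⊆ R_δ`; the valuation
`ν_{δ*}` satisfies `ν_{δ*}(y_j) = 0` for `j ∈ F_δ` and `ν_{δ*}(y_j) > 0` for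
`j ∈ I_δ ∪ G_δ`; and the induced order-preserving surjection `φ̃ : Γ_{δ*} → Γ_δ` of value
groups satisfies `φ̃(ν_{δ*}(y_j)) = ν_δ(x_j)` for all `j`. -/
theorem induced_valuation_composed {F : Type*} [Field F] [LinearOrder F] [IsStrictOrderedRing F]
    (R : Subfield F) (hR : IsRealClosedSubfield R) {n : ℕ} (x : Fin n → F)
    (T : Finset (Fin n))
    (hT1 : ∀ j : Fin n, IsInfiniteOver R (x j) → j ∈ T)
    (hT2 : ∀ j ∈ T, IsInfiniteOver R (x j) ∨ IsBoundedUnitOver R (x j))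
    (y : Fin n → F) (hy : y = fun j => if j ∈ T then (x j)⁻¹ else x j)
    (Vδ : Subring F) (hVδ : Vδ = convexHullSubring (pointRing R x))
    (Vstar : Subring F) (hVstar : Vstar = convexHullSubring R.toSubring) :
    -- `R_{δ*} ⊆ R_δ`
    (∀ z : F, z ∈ Vstar → z ∈ Vδ) ∧
    -- `ν_{δ*}(y_j) = 0` for `j ∈ F_δ`
    (∀ j : Fin n, IsBoundedUnitOver R (x j) →
      y j ≠ 0 ∧ y j ∈ Vstar ∧ (y j)⁻¹ ∈ Vstar) ∧
    -- `ν_{δ*}(y_j) > 0` for `j ∈ I_δ ∪ G_δ`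
    (∀ j : Fin n,
      (IsInfiniteOver R (x j) ∨
        (IsInfinitesimalOver R (x j) ∧ x j ≠ 0 ∧ (x j)⁻¹ ∈ Vδ)) →
      y j ≠ 0 ∧ y j ∈ Vstar ∧ (y j)⁻¹ ∉ Vstar) ∧
    -- the induced surjective order-preserving map `φ̃ : Γ_{δ*} → Γ_δ` with
    -- `φ̃(ν_{δ*}(y_j)) = ν_δ(x_j)`
    ∃ φ : Fˣ ⧸ unitSubgroup Vstar →* Fˣ ⧸ unitSubgroup Vδ,
      Function.Surjective φ ∧
      (∀ u : Fˣ, φ (QuotientGroup.mk u) = QuotientGroup.mk u) ∧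
      (∀ a b : Fˣ ⧸ unitSubgroup Vstar, valueGroupLE Vstar a b →
        valueGroupLE Vδ (φ a) (φ b)) ∧
      (∀ (j : Fin n) (u w : Fˣ), (u : F) = y j → (w : F) = x j →
        φ (QuotientGroup.mk u) = QuotientGroup.mk w) :=
  induced_valuation_composed_general R x T hT1 hT2 y hy Vδ hVδ Vstar hVstar
end
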